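/- arXiv:2605.11404 — 8 statements merged into one kernel-verified Lean document; each statement's English description precedes it below -/
import Mathlib

section
/- Let N > n ≥ 2, D ≥ 1, and let μ : ℝ^D → ℝ be of class C². Suppose f_N(z_1,…,z_N) = (1/N)·Σ_{j=1}^N μ(z_j) and f_n(y_1,…,y_n) = (1/n)·Σ_{j=1}^n μ(y_j). Fix a subset S ⊆ {1,…,N} with |S| = n, a baseline z⁰ ∈ ℝ^D, and features z = (z_1,…,z_N) ∈ (ℝ^D)^N such that Δv^S ≠ 0 and Δv^{[N]} ≠ 0. Then the scalar c(S,z) := (Σ_{j∈[N]} (μ(z_j) − μ(z⁰))) / (Σ_{j∈S} (μ(z_j) − μ(z⁰))) satisfies φ̃_i^S = c(S,z) · φ̃_i for every i ∈ S; in particular c(S,z) does not depend on i. -/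
/-!
For a separable value function `f y = c * ∑ j, μ (y j)`, the partial derivative of `f` in the
coordinates of agent `i` is `c` times the derivative of `μ` at agent `i`'s own point, so
`φ_i = c * ψ(z_i)` where `ψ` is the one-agent Aumann–Shapley attribution of `μ`, the same for
every population. Likewise `Δv = c * A` with `A = ∑ j, (μ (z j) - μ z0)`. Hence the factors
`1/n` and `1/N` cancel in the normalized attributions, which become `ψ(z_i) / A_S` and
`ψ(z_i) / A_N`, and these differ by the factor `A_N / A_S`.
-/

open scoped BigOperators

/-- Aumann–Shapley path-integral attribution of agent `i`. -/
noncomputable def phiAS {n D : ℕ} (f : (Fin n → Fin D → ℝ) → ℝ)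
    (z0 : Fin D → ℝ) (z : Fin n → Fin D → ℝ) (i : Fin n) : ℝ :=
  ∑ d : Fin D, (z i d - z0 d) *
    ∫ τ in (0:ℝ)..1,
      fderiv ℝ f (fun j => z0 + τ • (z j - z0)) (Pi.single i (Pi.single d 1))

noncomputable def singleAgentAS {D : ℕ} (μ : (Fin D → ℝ) → ℝ) (z0 x : Fin D → ℝ) : ℝ :=
  ∑ d : Fin D, (x d - z0 d) *
    ∫ τ in (0:ℝ)..1, fderiv ℝ μ (z0 + τ • (x - z0)) (Pi.single d 1)

section SeparableSum

variable {ι E : Type*} [Fintype ι] [NormedAddCommGroup E] [NormedSpace ℝ E]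

theorem hasFDerivAt_sum_comp_apply {μ : E → ℝ} {p : ι → E}
    (hμ : ∀ j, DifferentiableAt ℝ μ (p j)) :
    HasFDerivAt (fun y : ι → E => ∑ j, μ (y j))
      (∑ j, (fderiv ℝ μ (p j)).comp (ContinuousLinearMap.proj j)) p :=
  HasFDerivAt.fun_sum fun j _ => (hμ j).hasFDerivAt.comp p (hasFDerivAt_apply j p)

theorem fderiv_sum_comp_apply_single [DecidableEq ι] {μ : E → ℝ} {p : ι → E}
    (hμ : ∀ j, DifferentiableAt ℝ μ (p j)) (i : ι) (v : E) :
    fderiv ℝ (fun y : ι → E => ∑ j, μ (y j)) p (Pi.single i v) = fderiv ℝ μ (p i) v := by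
  rw [(hasFDerivAt_sum_comp_apply hμ).fderiv, sum_apply,
    Fintype.sum_eq_single i fun j hji => by simp [Pi.single_eq_of_ne hji]]
  simp

end SeparableSum

theorem Finset.sum_orderIsoOfFin {α M : Type*} [LinearOrder α] [AddCommMonoid M]
    (S : Finset α) {n : ℕ} (hS : S.card = n) (g : α → M) :
    ∑ k : Fin n, g (S.orderIsoOfFin hS k) = ∑ j ∈ S, g j := by
  rw [← Finset.sum_coe_sort S g]
  exact Fintype.sum_equiv (S.orderIsoOfFin hS).toEquiv _ _ fun _ => rfl

theorem phiAS_of_eq_const_mul_sum {n D : ℕ} {μ : (Fin D → ℝ) → ℝ} (hμ : Differentiable ℝ μ)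
    {c : ℝ} {f : (Fin n → Fin D → ℝ) → ℝ} (hf : ∀ y, f y = c * ∑ j, μ (y j))
    (z0 : Fin D → ℝ) (z : Fin n → Fin D → ℝ) (i : Fin n) :
    phiAS f z0 z i = c * singleAgentAS μ z0 (z i) := by
  have hderiv : ∀ p : Fin n → Fin D → ℝ, ∀ v : Fin D → ℝ,
      fderiv ℝ f p (Pi.single i v) = c * fderiv ℝ μ (p i) v := by
    intro p v
    have hsum : DifferentiableAt ℝ (fun y : Fin n → Fin D → ℝ => ∑ j, μ (y j)) p :=
      (hasFDerivAt_sum_comp_apply fun j => hμ (p j)).differentiableAt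
    rw [funext hf, fderiv_const_mul hsum, smul_apply, smul_eq_mul,
      fderiv_sum_comp_apply_single fun j => hμ (p j)]
  simp only [phiAS, singleAgentAS, hderiv, intervalIntegral.integral_const_mul, Finset.mul_sum]
  exact Finset.sum_congr rfl fun d _ => by ring

theorem attribution_scaling_bias_linear_case_general
    (N n D : ℕ)
    (μ : (Fin D → ℝ) → ℝ) (hμ : ContDiff ℝ 2 μ)
    (fn : (Fin n → Fin D → ℝ) → ℝ) (fN : (Fin N → Fin D → ℝ) → ℝ)
    (hfn : ∀ y, fn y = (1 / (n : ℝ)) * ∑ j : Fin n, μ (y j))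
    (hfN : ∀ w, fN w = (1 / (N : ℝ)) * ∑ j : Fin N, μ (w j))
    (S : Finset (Fin N)) (hS : S.card = n)
    (z0 : Fin D → ℝ) (z : Fin N → Fin D → ℝ)
    (hΔS : fn (fun k => (z ((S.orderIsoOfFin hS k : S) : Fin N))) -
        fn (fun _ => z0) ≠ 0)
    (hΔN : fN z - fN (fun _ => z0) ≠ 0) :
    ∀ (i : Fin N) (hi : i ∈ S),
      phiAS fn z0 (fun k => (z ((S.orderIsoOfFin hS k : S) : Fin N)))
          ((S.orderIsoOfFin hS).symm ⟨i, hi⟩) /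
          (fn (fun k => (z ((S.orderIsoOfFin hS k : S) : Fin N))) -
            fn (fun _ => z0)) =
        ((∑ j : Fin N, (μ (z j) - μ z0)) / (∑ j ∈ S, (μ (z j) - μ z0))) *
          (phiAS fN z0 z i / (fN z - fN (fun _ => z0))) := by
  intro i hi
  have hμd : Differentiable ℝ μ := hμ.differentiable (by norm_num)
  have hΔS_eq : fn (fun k => z (S.orderIsoOfFin hS k)) - fn (fun _ => z0) =
      1 / (n : ℝ) * ∑ j ∈ S, (μ (z j) - μ z0) := by
    rw [hfn, hfn, ← mul_sub, ← Finset.sum_sub_distrib,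
      Finset.sum_orderIsoOfFin S hS fun j => μ (z j) - μ z0]
  have hΔN_eq : fN z - fN (fun _ => z0) = 1 / (N : ℝ) * ∑ j, (μ (z j) - μ z0) := by
    rw [hfN, hfN, ← mul_sub, ← Finset.sum_sub_distrib]
  rw [hΔS_eq] at hΔS ⊢
  rw [hΔN_eq] at hΔN ⊢
  rw [phiAS_of_eq_const_mul_sum hμd hfn, phiAS_of_eq_const_mul_sum hμd hfN,
    OrderIso.apply_symm_apply, mul_div_mul_left _ _ (left_ne_zero_of_mul hΔS),
    mul_div_mul_left _ _ (left_ne_zero_of_mul hΔN),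
    div_mul_div_cancel₀' (right_ne_zero_of_mul hΔN)]

/-- Attribution Scaling Bias, linear case: if both the subset value function
`f_n` and the full-population value function `f_N` are linear with a shared
`C²` generator `μ`, then the normalized subset attribution equals the explicit
agent-independent scalar
`c(S,z) = (Σ_{j∈[N]} (μ(z_j) − μ(z⁰))) / (Σ_{j∈S} (μ(z_j) − μ(z⁰)))`
times the normalized full-population attribution, for every `i ∈ S`. -/
theorem attribution_scaling_bias_linear_case
    (N n D : ℕ) (hn : 2 ≤ n) (hNn : n < N) (hD : 1 ≤ D)
    (μ : (Fin D → ℝ) → ℝ) (hμ : ContDiff ℝ 2 μ)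
    (fn : (Fin n → Fin D → ℝ) → ℝ) (fN : (Fin N → Fin D → ℝ) → ℝ)
    (hfn : ∀ y, fn y = (1 / (n : ℝ)) * ∑ j : Fin n, μ (y j))
    (hfN : ∀ w, fN w = (1 / (N : ℝ)) * ∑ j : Fin N, μ (w j))
    (S : Finset (Fin N)) (hS : S.card = n)
    (z0 : Fin D → ℝ) (z : Fin N → Fin D → ℝ)
    (hΔS : fn (fun k => (z ((S.orderIsoOfFin hS k : S) : Fin N))) -
        fn (fun _ => z0) ≠ 0)
    (hΔN : fN z - fN (fun _ => z0) ≠ 0) :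
    ∀ (i : Fin N) (hi : i ∈ S),
      phiAS fn z0 (fun k => (z ((S.orderIsoOfFin hS k : S) : Fin N)))
          ((S.orderIsoOfFin hS).symm ⟨i, hi⟩) /
          (fn (fun k => (z ((S.orderIsoOfFin hS k : S) : Fin N))) -
            fn (fun _ => z0)) =
        ((∑ j : Fin N, (μ (z j) - μ z0)) / (∑ j ∈ S, (μ (z j) - μ z0))) *
          (phiAS fN z0 z i / (fN z - fN (fun _ => z0))) :=
  attribution_scaling_bias_linear_case_general N n D μ hμ fn fN hfn hfN S hS z0 z hΔS hΔN
end

section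
/- Hessian characterization, converse direction: fix n ≥ 2 and D ≥ 1, and let f_n : (ℝ^D)^n → ℝ be of class C² and permutation-invariant. If ∂²f_n/(∂z_{i,d} ∂z_{j,d'})(z) = 0 for all i ≠ j in {1,…,n}, all d, d' in {1,…,D}, and all z ∈ (ℝ^D)^n, then there exists a C² function μ : ℝ^D → ℝ such that f_n(z_1,…,z_n) = (1/n)·Σ_{i=1}^n μ(z_i) for all z ∈ (ℝ^D)^n. -/
open scoped BigOperators

/-- Mixed second partial derivative `∂²f/(∂z_{i,d} ∂z_{j,d'})` of a function
of `n` feature vectors in `ℝ^D`. -/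
noncomputable def mixedPartial {n D : ℕ} (f : (Fin n → Fin D → ℝ) → ℝ)
    (i : Fin n) (d : Fin D) (j : Fin n) (d' : Fin D)
    (z : Fin n → Fin D → ℝ) : ℝ :=
  fderiv ℝ (fun w => fderiv ℝ f w (Pi.single j (Pi.single d' 1))) z
    (Pi.single i (Pi.single d 1))

/-!
Since the mixed partials across distinct slots vanish, the partial derivative of `f` in slot `k`
depends on `z k` alone. Hence `z ↦ f z - ∑ k, f (Pi.single k (z k))` has zero derivative, so
`f z = f 0 + ∑ k, (f (Pi.single k (z k)) - f 0)`. Permutation invariance makes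
`x ↦ f (Pi.single k x)` independent of `k`, and `μ x = f 0 + n (f (Pi.single k x) - f 0)` works.
-/

variable {E F : Type*} [NormedAddCommGroup E] [NormedSpace ℝ E]
  [NormedAddCommGroup F] [NormedSpace ℝ F]

theorem fderiv_fderiv_apply_eq {f : E → F} {z : E} (hf : DifferentiableAt ℝ (fderiv ℝ f) z)
    (u v : E) :
    fderiv ℝ (fun w => fderiv ℝ f w v) z u = fderiv ℝ (fderiv ℝ f) z u v := by
  simp [fderiv_clm_apply hf (differentiableAt_const v)]

theorem Differentiable.apply_add_eq_of_fderiv_apply_eq_zero {g : E → F}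
    (hg : Differentiable ℝ g) {u : E} (h : ∀ w, fderiv ℝ g w u = 0) (x : E) :
    g (x + u) = g x := by
  have hderiv (t : ℝ) : HasDerivAt (fun s : ℝ => g (x + s • u)) (fderiv ℝ g (x + t • u) u) t :=
    (hg _).hasFDerivAt.comp_hasDerivAt t
      (by simpa using ((hasDerivAt_id t).smul_const u).const_add x)
  simpa using is_const_of_deriv_eq_zero (fun t => (hderiv t).differentiableAt)
    (fun t => by rw [(hderiv t).deriv, h]) 1 0

section Coordinates

variable {ι : Type*} [Fintype ι] [DecidableEq ι]

theorem ContinuousLinearMap.map_eq_zero_of_apply_eq_zero {k : ι} (L : (ι → E) →L[ℝ] F)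
    (hL : ∀ j, j ≠ k → ∀ a, L (Pi.single j a) = 0) {u : ι → E} (hu : u k = 0) : L u = 0 := by
  rw [← Finset.univ_sum_single u, map_sum]
  refine Finset.sum_eq_zero fun j _ => ?_
  rcases eq_or_ne j k with rfl | hjk
  · simp [hu]
  · exact hL j hjk _

theorem eq_apply_single_of_fderiv_single_eq_zero {g : (ι → E) → F} (hg : Differentiable ℝ g)
    {k : ι} (h : ∀ w j, j ≠ k → ∀ a, fderiv ℝ g w (Pi.single j a) = 0) (z : ι → E) :
    g z = g (Pi.single k (z k)) := by
  have hshift := hg.apply_add_eq_of_fderiv_apply_eq_zero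
    (fun w => (fderiv ℝ g w).map_eq_zero_of_apply_eq_zero (h w) (u := z - Pi.single k (z k))
      (by simp)) (Pi.single k (z k))
  rwa [add_sub_cancel] at hshift

theorem eq_add_sum_sub_of_fderiv_single_eq {f : (ι → E) → F} (hf : Differentiable ℝ f)
    (h : ∀ z k b, fderiv ℝ f z (Pi.single k b) = fderiv ℝ f (Pi.single k (z k)) (Pi.single k b))
    (z : ι → E) :
    f z = f 0 + ∑ k, (f (Pi.single k (z k)) - f 0) := by
  let P (k : ι) : (ι → E) →L[ℝ] (ι → E) :=
    (ContinuousLinearMap.single ℝ (fun _ => E) k).comp (ContinuousLinearMap.proj k)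
  set H : (ι → E) → F := fun z => f z - ∑ k, (f (Pi.single k (z k)) - f 0)
  have hH (z : ι → E) : HasFDerivAt H (0 : (ι → E) →L[ℝ] F) z := by
    have hsum : HasFDerivAt (fun w => ∑ k, (f (Pi.single k (w k)) - f 0))
        (∑ k, (fderiv ℝ f (P k z)).comp (P k)) z :=
      HasFDerivAt.fun_sum fun k (_ : k ∈ Finset.univ) =>
        ((hf _).hasFDerivAt.comp z (P k).hasFDerivAt).sub_const _
    have hsplit : fderiv ℝ f z = ∑ k, (fderiv ℝ f (P k z)).comp (P k) := by
      ext v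
      conv_lhs => rw [← Finset.univ_sum_single v, map_sum]
      simp [P, h z]
    have hH := (hf z).hasFDerivAt.sub hsum
    rwa [← hsplit, sub_self] at hH
  have hconst := is_const_of_fderiv_eq_zero (fun w => (hH w).differentiableAt)
    (fun w => (hH w).fderiv) z 0
  simp only [H, Pi.zero_apply, Pi.single_zero, sub_self, Finset.sum_const_zero, sub_zero] at hconst
  exact sub_eq_iff_eq_add.mp hconst

theorem eq_add_sum_sub_of_fderiv_fderiv_single_single_eq_zero {f : (ι → E) → F}
    (hf : ContDiff ℝ 2 f)
    (hcross : ∀ z i j, i ≠ j → ∀ a b,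
      fderiv ℝ (fderiv ℝ f) z (Pi.single i a) (Pi.single j b) = 0)
    (z : ι → E) :
    f z = f 0 + ∑ k, (f (Pi.single k (z k)) - f 0) := by
  have hf2 : Differentiable ℝ (fderiv ℝ f) :=
    (hf.fderiv_right (by norm_num)).differentiable one_ne_zero
  refine eq_add_sum_sub_of_fderiv_single_eq (hf.differentiable two_ne_zero) (fun w k b => ?_) z
  refine eq_apply_single_of_fderiv_single_eq_zero (hf2.clm_apply (differentiable_const _))
    (fun w j hjk a => ?_) w
  rw [fderiv_fderiv_apply_eq (hf2 w)]
  exact hcross w j k hjk a b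

end Coordinates

theorem apply_single_eq_of_forall_perm {ι E α : Type*} [DecidableEq ι] [Zero E]
    {f : (ι → E) → α} (hsym : ∀ (π : Equiv.Perm ι) (z : ι → E), f (fun k => z (π k)) = f z)
    (k l : ι) (x : E) : f (Pi.single k x) = f (Pi.single l x) := by
  have h := hsym (Equiv.swap k l) (Pi.single l x)
  rwa [← Function.comp_def, Pi.single_comp_equiv, Equiv.symm_swap, Equiv.swap_apply_right] at h

theorem ContinuousLinearMap.eq_zero_of_forall_single_one {R κ M : Type*} [Semiring R]
    [TopologicalSpace R] [Fintype κ] [DecidableEq κ] [AddCommMonoid M] [Module R M]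
    [TopologicalSpace M] (L : (κ → R) →L[R] M) (h : ∀ d, L (Pi.single d 1) = 0) : L = 0 :=
  coe_injective ((Pi.basisFun R κ).ext fun d => by simpa using h d)

theorem ContinuousLinearMap.apply_single_single_eq_zero {ι κ : Type*} [Fintype ι] [DecidableEq ι]
    [Fintype κ] [DecidableEq κ] (B : (ι → κ → ℝ) →L[ℝ] (ι → κ → ℝ) →L[ℝ] F) {i j : ι}
    (h : ∀ d d', B (Pi.single i (Pi.single d 1)) (Pi.single j (Pi.single d' 1)) = 0)
    (a b : κ → ℝ) : B (Pi.single i a) (Pi.single j b) = 0 := by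
  have hB : (B.comp (single ℝ _ i)).flip.comp (single ℝ (fun _ => κ → ℝ) j) = 0 :=
    eq_zero_of_forall_single_one _ fun d' =>
      eq_zero_of_forall_single_one _ fun d => by simpa using h d d'
  simpa using congr($hB b a)

theorem mixedPartial_eq_fderiv_fderiv {n D : ℕ} {f : (Fin n → Fin D → ℝ) → ℝ}
    {z : Fin n → Fin D → ℝ} (hf : DifferentiableAt ℝ (fderiv ℝ f) z) (i j : Fin n) (d d' : Fin D) :
    mixedPartial f i d j d' z =
      fderiv ℝ (fderiv ℝ f) z (Pi.single i (Pi.single d 1)) (Pi.single j (Pi.single d' 1)) :=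
  fderiv_fderiv_apply_eq hf _ _

theorem hessian_characterization_converse_general
    (n D : ℕ) (hn : 2 ≤ n)
    (f : (Fin n → Fin D → ℝ) → ℝ) (hf : ContDiff ℝ 2 f)
    (hsym : ∀ (π : Equiv.Perm (Fin n)) (z : Fin n → Fin D → ℝ),
      f (fun k => z (π k)) = f z)
    (hhess : ∀ (i j : Fin n), i ≠ j →
      ∀ (d d' : Fin D) (z : Fin n → Fin D → ℝ), mixedPartial f i d j d' z = 0) :
    ∃ μ : (Fin D → ℝ) → ℝ, ContDiff ℝ 2 μ ∧
      ∀ z : Fin n → Fin D → ℝ, f z = (1 / (n : ℝ)) * ∑ i : Fin n, μ (z i) := by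
  have hf2 : Differentiable ℝ (fderiv ℝ f) :=
    (hf.fderiv_right (by norm_num)).differentiable one_ne_zero
  have hsep := eq_add_sum_sub_of_fderiv_fderiv_single_single_eq_zero hf fun z i j hij =>
    ContinuousLinearMap.apply_single_single_eq_zero _ fun d d' => by
      rw [← mixedPartial_eq_fderiv_fderiv (hf2 z)]
      exact hhess i j hij d d' z
  let i₀ : Fin n := ⟨0, by omega⟩
  refine ⟨fun x => f 0 + n * (f (Pi.single i₀ x) - f 0), ?_, fun z => ?_⟩
  · exact contDiff_const.add <| contDiff_const.mul <|
      (hf.comp (ContinuousLinearMap.single ℝ _ i₀).contDiff).sub contDiff_const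
  · have hn0 : (n : ℝ) ≠ 0 := Nat.cast_ne_zero.mpr (by omega)
    rw [hsep z, Finset.sum_add_distrib, ← Finset.mul_sum, Finset.sum_const, Finset.card_univ,
      Fintype.card_fin]
    simp only [apply_single_eq_of_forall_perm hsym _ i₀]
    field_simp
    ring

/-- Hessian characterization, converse direction: if `f` is `C²`,
permutation-invariant, and all mixed second partial derivatives across
distinct slots vanish identically, then `f` is linear, i.e. there is a `C²`
generator `μ : ℝ^D → ℝ` with `f(z_1,…,z_n) = (1/n)·Σ_i μ(z_i)`. -/
theorem hessian_characterization_converse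
    (n D : ℕ) (hn : 2 ≤ n) (hD : 1 ≤ D)
    (f : (Fin n → Fin D → ℝ) → ℝ) (hf : ContDiff ℝ 2 f)
    (hsym : ∀ (π : Equiv.Perm (Fin n)) (z : Fin n → Fin D → ℝ),
      f (fun k => z (π k)) = f z)
    (hhess : ∀ (i j : Fin n), i ≠ j →
      ∀ (d d' : Fin D) (z : Fin n → Fin D → ℝ), mixedPartial f i d j d' z = 0) :
    ∃ μ : (Fin D → ℝ) → ℝ, ContDiff ℝ 2 μ ∧
      ∀ z : Fin n → Fin D → ℝ, f z = (1 / (n : ℝ)) * ∑ i : Fin n, μ (z i) :=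
  hessian_characterization_converse_general n D hn f hf hsym hhess
end

section
/- Explicit reconciliation failure at minimal size N = 3: take D = 1, zero baseline z⁰ = 0, value functions f_n(z) = (1/n²)·Σ_{1 ≤ i < j ≤ n} z_i·z_j for n ∈ {2,3}, features (z_1, z_2, z_3) = (1, 1, 2), and subset S = {1, 3}. Then Δv^{[3]} = 5/9 ≠ 0 and Δv^S = 1/2 ≠ 0, the full-population normalized attributions are φ̃_1 = φ̃_2 = 3/10 and φ̃_3 = 2/5, the subset normalized attributions are φ̃_1^S = φ̃_3^S = 1/2, and there exists no scalar c ∈ ℝ with φ̃_i^S = c·φ̃_i for every i ∈ S. -/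
open scoped BigOperators

/-- Aumann–Shapley path-integral attribution of agent `i` with zero baseline
in dimension one: `φ_i = z_i · ∫₀¹ (∂f/∂z_i)(τ·z) dτ`. -/
noncomputable def phi01 {n : ℕ} (f : (Fin n → ℝ) → ℝ)
    (z : Fin n → ℝ) (i : Fin n) : ℝ :=
  z i * ∫ τ in (0:ℝ)..1, fderiv ℝ f (τ • z) (Pi.single i 1)

/-!
The games `f_n = c · Σ_{i<j} z_i z_j` are homogeneous quadratics, so along the path `τ · z` each
partial derivative is `τ` times its value at `z`, and the Aumann–Shapley integral halves it:
`φ_k = c · z_k · Σ_{j ≠ k} z_j / 2`, while `Δv = c · Σ_{i<j} z_i z_j`. Normalizing cancels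
`c = 1/n²`, leaving `φ̃_k = z_k Σ_{j ≠ k} z_j / (2 Σ_{i<j} z_i z_j)`. On `S` the two agents get
`1/2` each, but on the full population agents `1` and `3` get `3/10` and `2/5`, in ratio `3 : 4`,
so no single scalar relates the two attributions.
-/

open Finset

theorem Finset.sum_Iio_add_sum_Ioi {ι M : Type*} [Fintype ι] [LinearOrder ι]
    [LocallyFiniteOrderBot ι] [LocallyFiniteOrderTop ι] [AddCommMonoid M] (g : ι → M) (k : ι) :
    ∑ i ∈ Iio k, g i + ∑ i ∈ Ioi k, g i = ∑ i ∈ univ.erase k, g i := by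
  rw [← sum_union (disjoint_left.2 fun i hi hi' => (mem_Iio.1 hi).asymm (mem_Ioi.1 hi'))]
  congr 1
  ext i
  simp [eq_comm]

theorem Finset.orderIsoOfFin_pair {α : Type*} [LinearOrder α] {a b : α} (hab : a < b)
    (h : ({a, b} : Finset α).card = 2) :
    (({a, b} : Finset α).orderIsoOfFin h 0 : α) = a ∧
      (({a, b} : Finset α).orderIsoOfFin h 1 : α) = b := by
  simp only [coe_orderIsoOfFin_apply]
  constructor
  · rw [show (0 : Fin 2) = ⟨0, two_pos⟩ from rfl, orderEmbOfFin_zero]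
    simp [hab.le]
  · rw [show (1 : Fin 2) = ⟨2 - 1, by norm_num⟩ from rfl, orderEmbOfFin_last _ two_pos]
    simp [hab.le]

def pairSum {n : ℕ} (w : Fin n → ℝ) : ℝ := ∑ i, ∑ j ∈ Ioi i, w i * w j

section

variable {n : ℕ}

theorem pairSum_zero : pairSum (fun _ : Fin n => (0 : ℝ)) = 0 := by
  simp [pairSum]

theorem hasFDerivAt_pairSum (p : Fin n → ℝ) :
    HasFDerivAt pairSum (∑ i, ∑ j ∈ Ioi i,
      (p i • ContinuousLinearMap.proj (R := ℝ) (φ := fun _ : Fin n => ℝ) j +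
        p j • ContinuousLinearMap.proj (R := ℝ) (φ := fun _ : Fin n => ℝ) i)) p :=
  HasFDerivAt.fun_sum fun i _ => HasFDerivAt.fun_sum fun j _ =>
    (hasFDerivAt_apply i p).mul (hasFDerivAt_apply j p)

theorem fderiv_pairSum_single (p : Fin n → ℝ) (k : Fin n) :
    fderiv ℝ pairSum p (Pi.single k 1) = ∑ j ∈ univ.erase k, p j := by
  rw [(hasFDerivAt_pairSum p).fderiv, ← sum_Iio_add_sum_Ioi]
  simp [Pi.single_apply, sum_add_distrib, ← sum_filter, filter_gt_eq_Iio]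

theorem phi01_eq_of_fderiv_single_eq_mul {f : (Fin n → ℝ) → ℝ} {z : Fin n → ℝ} {i : Fin n}
    {a : ℝ} (h : ∀ τ : ℝ, fderiv ℝ f (τ • z) (Pi.single i 1) = τ * a) :
    phi01 f z i = z i * a / 2 := by
  simp only [phi01, h, intervalIntegral.integral_mul_const, integral_id]
  ring

theorem phi01_const_mul_pairSum {f : (Fin n → ℝ) → ℝ} {c : ℝ} (hf : ∀ w, f w = c * pairSum w)
    (z : Fin n → ℝ) (k : Fin n) :
    phi01 f z k = c * z k * (∑ j ∈ univ.erase k, z j) / 2 := by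
  obtain rfl : f = fun w => c * pairSum w := funext hf
  rw [phi01_eq_of_fderiv_single_eq_mul (a := c * ∑ j ∈ univ.erase k, z j)]
  · ring
  intro τ
  rw [fderiv_const_mul (hasFDerivAt_pairSum _).differentiableAt]
  simp only [fderiv_pairSum_single, smul_apply, Pi.smul_apply, smul_eq_mul, ← mul_sum]
  ring

theorem sub_zero_const_mul_pairSum {f : (Fin n → ℝ) → ℝ} {c : ℝ} (hf : ∀ w, f w = c * pairSum w)
    (z : Fin n → ℝ) : f z - f (fun _ => 0) = c * pairSum z := by
  rw [hf, hf, pairSum_zero, mul_zero, sub_zero]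

theorem phi01_div_sub_zero_const_mul_pairSum {f : (Fin n → ℝ) → ℝ} {c : ℝ}
    (hf : ∀ w, f w = c * pairSum w) (hc : c ≠ 0) (z : Fin n → ℝ) (k : Fin n) :
    phi01 f z k / (f z - f (fun _ => 0)) =
      z k * (∑ j ∈ univ.erase k, z j) / (2 * pairSum z) := by
  rw [phi01_const_mul_pairSum hf, sub_zero_const_mul_pairSum hf, mul_assoc c, mul_div_assoc,
    mul_div_mul_left _ _ hc, div_div]

end

/-- Agents are indexed from `0`: the paper's `S = {1, 3}` is `{0, 2}` here. -/
theorem explicit_reconciliation_failure_N3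
    (f2 : (Fin 2 → ℝ) → ℝ) (f3 : (Fin 3 → ℝ) → ℝ)
    (hf2 : ∀ w, f2 w = (1 / (2 : ℝ) ^ 2) *
      ∑ i : Fin 2, ∑ j ∈ Finset.Ioi i, w i * w j)
    (hf3 : ∀ w, f3 w = (1 / (3 : ℝ) ^ 2) *
      ∑ i : Fin 3, ∑ j ∈ Finset.Ioi i, w i * w j)
    (z : Fin 3 → ℝ) (hz : z = ![1, 1, 2])
    (S : Finset (Fin 3)) (hS : S = {0, 2}) (hcard : S.card = 2) :
    f3 z - f3 (fun _ => 0) = 5 / 9 ∧ (5 / 9 : ℝ) ≠ 0 ∧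
    f2 (fun k => z ((S.orderIsoOfFin hcard k : S) : Fin 3)) -
      f2 (fun _ => 0) = 1 / 2 ∧ (1 / 2 : ℝ) ≠ 0 ∧
    phi01 f3 z 0 / (f3 z - f3 (fun _ => 0)) = 3 / 10 ∧
    phi01 f3 z 1 / (f3 z - f3 (fun _ => 0)) = 3 / 10 ∧
    phi01 f3 z 2 / (f3 z - f3 (fun _ => 0)) = 2 / 5 ∧
    (∀ k : Fin 2,
      phi01 f2 (fun k' => z ((S.orderIsoOfFin hcard k' : S) : Fin 3)) k /
        (f2 (fun k' => z ((S.orderIsoOfFin hcard k' : S) : Fin 3)) -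
          f2 (fun _ => 0)) = 1 / 2) ∧
    ¬∃ c : ℝ, ∀ (i : Fin 3) (hi : i ∈ S),
      phi01 f2 (fun k' => z ((S.orderIsoOfFin hcard k' : S) : Fin 3))
          ((S.orderIsoOfFin hcard).symm ⟨i, hi⟩) /
        (f2 (fun k' => z ((S.orderIsoOfFin hcard k' : S) : Fin 3)) -
          f2 (fun _ => 0)) =
        c * (phi01 f3 z i / (f3 z - f3 (fun _ => 0))) := by
  subst hS hz
  obtain ⟨hS0, hS1⟩ := orderIsoOfFin_pair (by decide : (0 : Fin 3) < 2) hcard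
  have hzS : (fun k => (![1, 1, 2] : Fin 3 → ℝ) (({0, 2} : Finset (Fin 3)).orderIsoOfFin hcard k))
      = ![1, 2] := by
    ext k
    fin_cases k <;> simp [hS0, hS1]
  have hφ : ∀ k, phi01 f3 ![1, 1, 2] k / (f3 ![1, 1, 2] - f3 (fun _ => 0)) =
      ![3 / 10, 3 / 10, 2 / 5] k := by
    intro k
    rw [phi01_div_sub_zero_const_mul_pairSum hf3 (by norm_num)]
    fin_cases k <;> norm_num [pairSum, Fin.sum_univ_succ, sum_erase_eq_sub]
  have hφS : ∀ k, phi01 f2 ![1, 2] k / (f2 ![1, 2] - f2 (fun _ => 0)) = 1 / 2 := by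
    intro k
    rw [phi01_div_sub_zero_const_mul_pairSum hf2 (by norm_num)]
    fin_cases k <;> norm_num [pairSum, Fin.sum_univ_succ, sum_erase_eq_sub]
  rw [hzS]
  refine ⟨?_, by norm_num, ?_, by norm_num, hφ 0, hφ 1, hφ 2, hφS, ?_⟩
  · rw [sub_zero_const_mul_pairSum hf3]
    norm_num [pairSum, Fin.sum_univ_succ]
  · rw [sub_zero_const_mul_pairSum hf2]
    norm_num [pairSum, Fin.sum_univ_succ]
  · rintro ⟨c, hc⟩
    have h0 := hc 0 (by simp)
    have h2 := hc 2 (by simp)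
    rw [hφS, hφ] at h0 h2
    change (1 / 2 : ℝ) = c * (3 / 10) at h0
    change (1 / 2 : ℝ) = c * (2 / 5) at h2
    linarith
end

section
/- Closed-form attribution for the multiplicative-saturating heat value function: fix n ≥ 1, D = 3, the zero baseline, features z_i = (a_i, b_i, c_i) ∈ ℝ³ with a_i, b_i, c_i ≥ 0 and Σ_j a_j > 0, Σ_j b_j > 0, Σ_j c_j > 0, and f^heat(z) := log(1 + m_a·m_b·m_c) where m_a := (1/n)·Σ_j a_j, m_b := (1/n)·Σ_j b_j, m_c := (1/n)·Σ_j c_j. Then for every i, the Aumann–Shapley attribution equals φ_i^heat = (1/3)·( a_i/Σ_j a_j + b_i/Σ_j b_j + c_i/Σ_j c_j )·f^heat(z), and Σ_{i=1}^n φ_i^heat = f^heat(z). -/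
/-!
The heat value is `log (1 + P)`, where `P` is the product of the `D` column means, a form
homogeneous of degree `D`. Along the ray `τ ↦ τ • z` the partial derivative in coordinate `(i, d)`
is `τ ^ (D - 1) * P z / ((∑ j, z j d) * (1 + τ ^ D * P z))`, which is `(D * ∑ j, z j d)⁻¹` times
the `τ`-derivative of `log (1 + τ ^ D * P z)`. Integrating over `[0, 1]` gives
`φ i = (1 / D) * (∑ d, z i d / ∑ j, z j d) * log (1 + P z)`, and these sum to `log (1 + P z)`.
-/

open scoped BigOperators

/-- Aumann–Shapley path-integral attribution of agent `i` with zero baseline. -/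
noncomputable def phi0 {n D : ℕ} (f : (Fin n → Fin D → ℝ) → ℝ)
    (z : Fin n → Fin D → ℝ) (i : Fin n) : ℝ :=
  ∑ d : Fin D, z i d *
    ∫ τ in (0:ℝ)..1, fderiv ℝ f (τ • z) (Pi.single i (Pi.single d 1))

open Finset Real

section

variable {n D : ℕ}

noncomputable def colMean (d : Fin D) : (Fin n → Fin D → ℝ) →L[ℝ] ℝ :=
  (n : ℝ)⁻¹ • ∑ j, (ContinuousLinearMap.proj d).comp (ContinuousLinearMap.proj j)

lemma colMean_apply (d : Fin D) (w : Fin n → Fin D → ℝ) :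
    colMean d w = (∑ j, w j d) / n := by
  simp [colMean, div_eq_inv_mul]

lemma colMean_single (i : Fin n) (d e : Fin D) :
    colMean e (Pi.single i (Pi.single d 1) : Fin n → Fin D → ℝ) =
      (Pi.single d (n : ℝ)⁻¹ : Fin D → ℝ) e := by
  rw [colMean_apply, ← Finset.sum_apply, sum_pi_single', if_pos (mem_univ i)]
  by_cases h : e = d
  · subst h; simp
  · simp [h]

lemma colMean_pos {w : Fin n → Fin D → ℝ} {d : Fin D} (h : 0 < ∑ j, w j d) :
    0 < colMean d w := by
  have hn : n ≠ 0 := by rintro rfl; simp at h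
  rw [colMean_apply]
  positivity

noncomputable def prodMean (w : Fin n → Fin D → ℝ) : ℝ := ∏ d, colMean d w

lemma prodMean_pos {w : Fin n → Fin D → ℝ} (h : ∀ d, 0 < ∑ j, w j d) : 0 < prodMean w :=
  prod_pos fun d _ => colMean_pos (h d)

lemma prodMean_smul (τ : ℝ) (w : Fin n → Fin D → ℝ) : prodMean (τ • w) = τ ^ D * prodMean w := by
  simp [prodMean, prod_mul_distrib]

lemma prod_erase_colMean_smul (τ : ℝ) (w : Fin n → Fin D → ℝ) (d : Fin D) :
    ∏ e ∈ univ.erase d, colMean e (τ • w) = τ ^ (D - 1) * ∏ e ∈ univ.erase d, colMean e w := by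
  simp [prod_mul_distrib]

lemma prod_erase_colMean_eq {w : Fin n → Fin D → ℝ} {d : Fin D} (h : colMean d w ≠ 0) :
    ∏ e ∈ univ.erase d, colMean e w = prodMean w / colMean d w :=
  eq_div_of_mul_eq h <| by
    rw [mul_comm]; exact mul_prod_erase univ (fun e => colMean e w) (mem_univ d)

lemma hasFDerivAt_prodMean (x : Fin n → Fin D → ℝ) :
    HasFDerivAt prodMean (∑ d, (∏ e ∈ univ.erase d, colMean e x) • colMean d) x :=
  HasFDerivAt.finsetProd fun d _ => (colMean d).hasFDerivAt

lemma fderiv_log_one_add_prodMean_single {x : Fin n → Fin D → ℝ} (hx : 1 + prodMean x ≠ 0)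
    (i : Fin n) (d : Fin D) :
    fderiv ℝ (fun w => log (1 + prodMean w)) x (Pi.single i (Pi.single d 1)) =
      (∏ e ∈ univ.erase d, colMean e x) / (n * (1 + prodMean x)) := by
  rw [(((hasFDerivAt_prodMean x).const_add 1).log hx).fderiv]
  simp only [smul_apply, _root_.sum_apply, colMean_single, Pi.single_apply, smul_eq_mul, mul_ite,
    mul_zero, sum_ite_eq', mem_univ, ↓reduceIte]
  field_simp

lemma one_add_pow_mul_pos {Q τ : ℝ} (hQ : -1 < Q) (hτ : τ ∈ Set.Icc (0 : ℝ) 1) (k : ℕ) :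
    0 < 1 + τ ^ k * Q := by
  have h0 : 0 ≤ τ ^ k := pow_nonneg hτ.1 k
  have h1 : τ ^ k ≤ 1 := pow_le_one₀ hτ.1 hτ.2
  rcases le_or_gt 0 Q with hQ0 | hQ0 <;> nlinarith

lemma integral_pow_mul_div_one_add_pow_mul {k : ℕ} (hk : k ≠ 0) {Q : ℝ} (hQ : -1 < Q) :
    ∫ τ in (0 : ℝ)..1, k * τ ^ (k - 1) * Q / (1 + τ ^ k * Q) = log (1 + Q) := by
  have hpos : ∀ τ ∈ Set.uIcc (0 : ℝ) 1, 0 < 1 + τ ^ k * Q := fun τ hτ =>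
    one_add_pow_mul_pos hQ (by rwa [Set.uIcc_of_le zero_le_one] at hτ) k
  have hderiv : ∀ τ ∈ Set.uIcc (0 : ℝ) 1,
      HasDerivAt (fun t => log (1 + t ^ k * Q)) (k * τ ^ (k - 1) * Q / (1 + τ ^ k * Q)) τ :=
    fun τ hτ => by
      simpa [div_eq_inv_mul, mul_assoc] using
        (((hasDerivAt_pow k τ).mul_const Q).const_add 1).log (hpos τ hτ).ne'
  have hint : IntervalIntegrable (fun τ : ℝ => k * τ ^ (k - 1) * Q / (1 + τ ^ k * Q))
      MeasureTheory.volume 0 1 :=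
    (ContinuousOn.div (by fun_prop) (by fun_prop) fun τ hτ => (hpos τ hτ).ne').intervalIntegrable
  rw [intervalIntegral.integral_eq_sub_of_hasDerivAt hderiv hint]
  simp [hk]

lemma fderiv_log_one_add_prodMean_smul_single {z : Fin n → Fin D → ℝ} {d : Fin D}
    (hS : ∑ j, z j d ≠ 0) (hP : -1 < prodMean z) {τ : ℝ} (hτ : τ ∈ Set.Icc (0 : ℝ) 1)
    (i : Fin n) :
    fderiv ℝ (fun w => log (1 + prodMean w)) (τ • z) (Pi.single i (Pi.single d 1)) =
      (D * ∑ j, z j d)⁻¹ * (D * τ ^ (D - 1) * prodMean z / (1 + τ ^ D * prodMean z)) := by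
  have hn : (n : ℝ) ≠ 0 := Nat.cast_ne_zero.mpr i.pos.ne'
  have hD : (D : ℝ) ≠ 0 := Nat.cast_ne_zero.mpr d.pos.ne'
  have hdenom := (one_add_pow_mul_pos hP hτ D).ne'
  have hmean : colMean d z ≠ 0 := by rw [colMean_apply]; exact div_ne_zero hS hn
  rw [fderiv_log_one_add_prodMean_single (by rwa [prodMean_smul]), prod_erase_colMean_smul,
    prod_erase_colMean_eq hmean, prodMean_smul, colMean_apply]
  field_simp

theorem phi0_log_one_add_prodMean {z : Fin n → Fin D → ℝ} (hS : ∀ d, ∑ j, z j d ≠ 0)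
    (hP : -1 < prodMean z) (i : Fin n) :
    phi0 (fun w => log (1 + prodMean w)) z i =
      (∑ d, z i d / ∑ j, z j d) / D * log (1 + prodMean z) := by
  rw [phi0, sum_div, sum_mul]
  refine sum_congr rfl fun d _ => ?_
  have hpath : Set.EqOn
      (fun τ : ℝ => fderiv ℝ (fun w => log (1 + prodMean w)) (τ • z) (Pi.single i (Pi.single d 1)))
      (fun τ => (D * ∑ j, z j d)⁻¹ * (D * τ ^ (D - 1) * prodMean z / (1 + τ ^ D * prodMean z)))
      (Set.uIcc 0 1) := fun τ hτ =>
    fderiv_log_one_add_prodMean_smul_single (hS d) hP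
      (by rwa [Set.uIcc_of_le zero_le_one] at hτ) i
  rw [intervalIntegral.integral_congr hpath, intervalIntegral.integral_const_mul,
    integral_pow_mul_div_one_add_pow_mul d.pos.ne' hP]
  field_simp

theorem sum_sum_div_sum_eq_card {z : Fin n → Fin D → ℝ} (hS : ∀ d, ∑ j, z j d ≠ 0) :
    ∑ i, ∑ d, z i d / ∑ j, z j d = D := by
  rw [sum_comm]
  simp [← sum_div, div_self (hS _)]

theorem sum_phi0_log_one_add_prodMean {z : Fin n → Fin D → ℝ} (hD : D ≠ 0)
    (hS : ∀ d, ∑ j, z j d ≠ 0) (hP : -1 < prodMean z) :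
    ∑ i, phi0 (fun w => log (1 + prodMean w)) z i = log (1 + prodMean z) := by
  have hD' : (D : ℝ) ≠ 0 := Nat.cast_ne_zero.mpr hD
  simp_rw [phi0_log_one_add_prodMean hS hP, ← sum_mul, ← sum_div, sum_sum_div_sum_eq_card hS,
    div_self hD', one_mul]

end

theorem closed_form_attribution_heat_general
    (n : ℕ)
    (z : Fin n → Fin 3 → ℝ)
    (ha : 0 < ∑ j : Fin n, z j 0)
    (hb : 0 < ∑ j : Fin n, z j 1)
    (hc : 0 < ∑ j : Fin n, z j 2)
    (f : (Fin n → Fin 3 → ℝ) → ℝ)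
    (hf : ∀ w, f w = Real.log (1 +
      ((1 / (n : ℝ)) * ∑ j : Fin n, w j 0) *
      ((1 / (n : ℝ)) * ∑ j : Fin n, w j 1) *
      ((1 / (n : ℝ)) * ∑ j : Fin n, w j 2))) :
    (∀ i : Fin n, phi0 f z i =
      (1 / 3) * (z i 0 / (∑ j : Fin n, z j 0) + z i 1 / (∑ j : Fin n, z j 1) +
        z i 2 / (∑ j : Fin n, z j 2)) * f z) ∧
    ∑ i : Fin n, phi0 f z i = f z := by
  have hS : ∀ d : Fin 3, 0 < ∑ j, z j d := by
    intro d; fin_cases d <;> assumption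
  have hP : -1 < prodMean z := by linarith [prodMean_pos hS]
  obtain rfl : f = fun w => log (1 + prodMean w) := funext fun w => by
    simp only [hf, prodMean, Fin.prod_univ_three, colMean_apply, one_div_mul_eq_div, mul_assoc]
  refine ⟨fun i => ?_, sum_phi0_log_one_add_prodMean three_ne_zero (fun d => (hS d).ne') hP⟩
  rw [phi0_log_one_add_prodMean (fun d => (hS d).ne') hP, Fin.sum_univ_three]
  push_cast
  ring

/-- Closed-form attribution for the multiplicative-saturating heat value
function `f^heat(z) = log(1 + m_a·m_b·m_c)` with nonnegative features and
positive column sums: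
`φ_i^heat = (1/3)·(a_i/Σ_j a_j + b_i/Σ_j b_j + c_i/Σ_j c_j)·f^heat(z)`,
and the attributions sum to `f^heat(z)`. -/
theorem closed_form_attribution_heat
    (n : ℕ) (hn : 1 ≤ n)
    (z : Fin n → Fin 3 → ℝ)
    (hpos : ∀ (i : Fin n) (d : Fin 3), 0 ≤ z i d)
    (ha : 0 < ∑ j : Fin n, z j 0)
    (hb : 0 < ∑ j : Fin n, z j 1)
    (hc : 0 < ∑ j : Fin n, z j 2)
    (f : (Fin n → Fin 3 → ℝ) → ℝ)
    (hf : ∀ w, f w = Real.log (1 +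
      ((1 / (n : ℝ)) * ∑ j : Fin n, w j 0) *
      ((1 / (n : ℝ)) * ∑ j : Fin n, w j 1) *
      ((1 / (n : ℝ)) * ∑ j : Fin n, w j 2))) :
    (∀ i : Fin n, phi0 f z i =
      (1 / 3) * (z i 0 / (∑ j : Fin n, z j 0) + z i 1 / (∑ j : Fin n, z j 1) +
        z i 2 / (∑ j : Fin n, z j 2)) * f z) ∧
    ∑ i : Fin n, phi0 f z i = f z :=
  closed_form_attribution_heat_general n z ha hb hc f hf
end

section
/- Closed-form attribution for the population-variance value function: fix n ≥ 1, D ≥ 1, the zero baseline, features z_i ∈ ℝ^D, g_i := Σ_{d=1}^D z_{i,d}, ḡ := (1/n)·Σ_{i=1}^n g_i, and f^var(z) := (1/n)·Σ_{i=1}^n (g_i − ḡ)². Then for every i, the Aumann–Shapley attribution equals φ_i^var = g_i·(g_i − ḡ)/n, and Σ_{i=1}^n φ_i^var = (1/n)·Σ_{i=1}^n (g_i − ḡ)² ≥ 0, i.e., the attributions sum to the population variance of (g_1,…,g_n). -/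
/-!
The variance value function is `(1/n) Σ_k H_k(w)²`, a sum of squares of the linear forms
`H_k(w) = g_k(w) - ḡ(w)`. Its derivative is linear in the base point, so along the ray `τ • z`
the integrand is `τ` times its value at `z`, and `∫₀¹ τ dτ = 1/2` cancels the factor `2` from
differentiating the squares: `φ_i = (1/n) Σ_d z_{i,d} Σ_k H_k(z) H_k(e_{i,d})`.
Since `H_k(e_{i,d}) = δ_{ki} - 1/n` and `Σ_k H_k = 0`, this collapses to `g_i H_i(z) / n`;
summing over `i` and using `Σ_i H_i = 0` once more leaves the variance.
-/

open scoped BigOperators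

open Finset

theorem sum_sub_mean_eq_zero {n : ℕ} (x : Fin n → ℝ) :
    ∑ i, (x i - 1 / (n : ℝ) * ∑ j, x j) = 0 := by
  rcases Nat.eq_zero_or_pos n with rfl | hn
  · simp
  · rw [sum_sub_distrib, sum_const, card_univ, Fintype.card_fin, nsmul_eq_mul]
    field_simp
    ring

theorem sum_mul_sub_mean_eq_sum_sq {n : ℕ} (x : Fin n → ℝ) :
    ∑ i, x i * (x i - 1 / (n : ℝ) * ∑ j, x j) = ∑ i, (x i - 1 / (n : ℝ) * ∑ j, x j) ^ 2 := by
  set m := 1 / (n : ℝ) * ∑ j, x j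
  calc ∑ i, x i * (x i - m) = ∑ i, (x i - m) ^ 2 + m * ∑ i, (x i - m) := by
        rw [mul_sum, ← sum_add_distrib]; exact sum_congr rfl fun i _ => by ring
    _ = _ := by rw [sum_sub_mean_eq_zero x, mul_zero, add_zero]

section SumOfSquares

variable {E ι : Type*} [NormedAddCommGroup E] [NormedSpace ℝ E] [Fintype ι]
  (c : ℝ) (L : ι → E →L[ℝ] ℝ)

theorem hasFDerivAt_const_mul_sum_sq (w : E) :
    HasFDerivAt (fun w => c * ∑ k, L k w ^ 2) (c • ∑ k, (2 * L k w) • L k) w := by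
  refine (HasFDerivAt.fun_sum fun k _ => ?_).const_mul c
  simpa using ((L k).hasFDerivAt (x := w)).pow 2

theorem integral_fderiv_const_mul_sum_sq_smul (z v : E) :
    ∫ τ in (0:ℝ)..1, fderiv ℝ (fun w => c * ∑ k, L k w ^ 2) (τ • z) v =
      c * ∑ k, L k z * L k v := by
  have integrand (τ : ℝ) : fderiv ℝ (fun w => c * ∑ k, L k w ^ 2) (τ • z) v =
      (2 * c * ∑ k, L k z * L k v) * τ := by
    rw [(hasFDerivAt_const_mul_sum_sq c L _).fderiv]
    simp only [smul_apply, _root_.sum_apply, map_smul, smul_eq_mul, mul_sum, sum_mul]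
    exact sum_congr rfl fun k _ => by ring
  simp only [integrand]
  rw [intervalIntegral.integral_const_mul, integral_id]
  ring

theorem phi0_const_mul_sum_sq {n D : ℕ} (L : ι → (Fin n → Fin D → ℝ) →L[ℝ] ℝ)
    (z : Fin n → Fin D → ℝ) (i : Fin n) :
    phi0 (fun w => c * ∑ k, L k w ^ 2) z i =
      c * ∑ d, z i d * ∑ k, L k z * L k (Pi.single i (Pi.single d 1)) := by
  simp only [phi0, integral_fderiv_const_mul_sum_sq_smul]
  rw [mul_sum]
  exact sum_congr rfl fun d _ => by ring

end SumOfSquares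

section GroupSums

variable {n D : ℕ}

noncomputable def groupSum (i : Fin n) : (Fin n → Fin D → ℝ) →L[ℝ] ℝ :=
  ∑ d, (ContinuousLinearMap.proj d).comp
    (ContinuousLinearMap.proj (R := ℝ) (φ := fun _ : Fin n => Fin D → ℝ) i)

noncomputable def centeredGroupSum (i : Fin n) : (Fin n → Fin D → ℝ) →L[ℝ] ℝ :=
  groupSum i - (1 / (n : ℝ)) • ∑ j, groupSum j

@[simp]
theorem groupSum_apply (i : Fin n) (w : Fin n → Fin D → ℝ) :
    groupSum i w = ∑ d, w i d := by
  simp [groupSum]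

theorem centeredGroupSum_apply (i : Fin n) (w : Fin n → Fin D → ℝ) :
    centeredGroupSum i w = ∑ d, w i d - 1 / (n : ℝ) * ∑ j, ∑ d, w j d := by
  simp [centeredGroupSum]

theorem sum_centeredGroupSum (w : Fin n → Fin D → ℝ) : ∑ i, centeredGroupSum i w = 0 := by
  simpa only [centeredGroupSum_apply] using sum_sub_mean_eq_zero fun i => ∑ d, w i d

theorem centeredGroupSum_single (k i : Fin n) (d : Fin D) :
    centeredGroupSum k (Pi.single i (Pi.single d 1)) = (if k = i then 1 else 0) - 1 / (n : ℝ) := by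
  have hsingle (j : Fin n) : ∑ d', (Pi.single i (Pi.single d (1 : ℝ)) : Fin n → Fin D → ℝ) j d' =
      if j = i then 1 else 0 := by
    by_cases h : j = i <;> simp [h]
  simp [centeredGroupSum_apply, hsingle]

theorem phi0_variance (z : Fin n → Fin D → ℝ) (i : Fin n) :
    phi0 (fun w => 1 / (n : ℝ) * ∑ k, centeredGroupSum k w ^ 2) z i =
      (∑ d, z i d) * centeredGroupSum i z / n := by
  have hcontract : ∑ k, centeredGroupSum k z * ((if k = i then 1 else 0) - 1 / (n : ℝ)) =
      centeredGroupSum i z := by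
    simp [mul_sub, sum_sub_distrib, ← sum_mul, sum_centeredGroupSum]
  simp only [phi0_const_mul_sum_sq, centeredGroupSum_single, hcontract, ← sum_mul]
  ring

end GroupSums

theorem closed_form_attribution_variance_general
    (n D : ℕ)
    (f : (Fin n → Fin D → ℝ) → ℝ)
    (hf : ∀ w, f w = (1 / (n : ℝ)) * ∑ i : Fin n,
      ((∑ d : Fin D, w i d) - (1 / (n : ℝ)) * ∑ j : Fin n, ∑ d : Fin D, w j d) ^ 2)
    (z : Fin n → Fin D → ℝ) :
    (∀ i : Fin n, phi0 f z i =
      (∑ d : Fin D, z i d) *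
        ((∑ d : Fin D, z i d) -
          (1 / (n : ℝ)) * ∑ j : Fin n, ∑ d : Fin D, z j d) / n) ∧
    ∑ i : Fin n, phi0 f z i = (1 / (n : ℝ)) * ∑ i : Fin n,
      ((∑ d : Fin D, z i d) -
        (1 / (n : ℝ)) * ∑ j : Fin n, ∑ d : Fin D, z j d) ^ 2 ∧
    0 ≤ ∑ i : Fin n, phi0 f z i := by
  have hf_eq : f = fun w => 1 / (n : ℝ) * ∑ k, centeredGroupSum k w ^ 2 := by
    funext w
    simp only [hf, centeredGroupSum_apply]
  have hphi (i : Fin n) : phi0 f z i = (∑ d, z i d) *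
      (∑ d, z i d - 1 / (n : ℝ) * ∑ j, ∑ d, z j d) / n := by
    rw [hf_eq, phi0_variance, centeredGroupSum_apply]
  have hsum : ∑ i, phi0 f z i = 1 / (n : ℝ) *
      ∑ i, (∑ d, z i d - 1 / (n : ℝ) * ∑ j, ∑ d, z j d) ^ 2 := by
    simp only [hphi, ← sum_div, sum_mul_sub_mean_eq_sum_sq fun i => ∑ d, z i d]
    ring
  exact ⟨hphi, hsum, hsum ▸ by positivity⟩

/-- Closed-form attribution for the population-variance value function
`f^var(z) = (1/n)·Σ_i (g_i − ḡ)²` with `g_i = Σ_d z_{i,d}` and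
`ḡ = (1/n)·Σ_i g_i`: `φ_i^var = g_i·(g_i − ḡ)/n`, the attributions sum to
the population variance of `(g_1,…,g_n)`, and that sum is nonnegative. -/
theorem closed_form_attribution_variance
    (n D : ℕ) (hn : 1 ≤ n) (hD : 1 ≤ D)
    (f : (Fin n → Fin D → ℝ) → ℝ)
    (hf : ∀ w, f w = (1 / (n : ℝ)) * ∑ i : Fin n,
      ((∑ d : Fin D, w i d) - (1 / (n : ℝ)) * ∑ j : Fin n, ∑ d : Fin D, w j d) ^ 2)
    (z : Fin n → Fin D → ℝ) :
    (∀ i : Fin n, phi0 f z i =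
      (∑ d : Fin D, z i d) *
        ((∑ d : Fin D, z i d) -
          (1 / (n : ℝ)) * ∑ j : Fin n, ∑ d : Fin D, z j d) / n) ∧
    ∑ i : Fin n, phi0 f z i = (1 / (n : ℝ)) * ∑ i : Fin n,
      ((∑ d : Fin D, z i d) -
        (1 / (n : ℝ)) * ∑ j : Fin n, ∑ d : Fin D, z j d) ^ 2 ∧
    0 ≤ ∑ i : Fin n, phi0 f z i :=
  closed_form_attribution_variance_general n D f hf z
end

section
/- Closed-form attribution for the Gini mean-difference value function: fix n ≥ 2, D ≥ 1, the zero baseline, features z_i ∈ ℝ^D with composites g_i := Σ_{d=1}^D z_{i,d} pairwise distinct, and f^gini(z) := (1/(2n²))·Σ_{i=1}^n Σ_{j=1}^n |g_i − g_j|. Let k_i ∈ {1,…,n} be the rank of g_i in increasing order. Then along the linear path τ ↦ τ·z (τ ∈ (0,1]) the ranks are preserved, the Aumann–Shapley attribution of agent i equals φ_i^gini = g_i·(2k_i − n − 1)/n², and Σ_{i=1}^n φ_i^gini = f^gini(z). -/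
/-!
For `τ > 0` the composites of `τ • z` are `τ • g`, still pairwise distinct and in the same
order, so `f` is differentiable at every point of the path: each term `|g_a - g_b|` with
`a ≠ b` contributes `sign (g_a - g_b)` times the difference of the two row-sum functionals.
The partial derivative in the coordinate `(i, d)` is therefore
`(1 / n²) ∑_j sign (g_i - g_j) = (2 k_i - n - 1) / n²`, constant along the path, so the path
integral is trivial. Efficiency follows from `|t| = sign t * t` and the antisymmetry of the
sign, which give `∑_{i,j} |g_i - g_j| = 2 ∑_i g_i ∑_j sign (g_i - g_j)`.
-/

open scoped BigOperators

open Finset Function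

section SignSums

variable {ι : Type*} [Fintype ι]

noncomputable def giniSum (x : ι → ℝ) : ℝ := ∑ a, ∑ b, |x a - x b|

theorem sum_sum_sign_sub_mul_sub (x v : ι → ℝ) :
    ∑ a, ∑ b, (SignType.sign (x a - x b) : ℝ) * (v a - v b) =
      2 * ∑ a, v a * ∑ b, (SignType.sign (x a - x b) : ℝ) := by
  have hskew : ∑ a, ∑ b, (SignType.sign (x a - x b) : ℝ) * v b =
      -∑ a, ∑ b, (SignType.sign (x a - x b) : ℝ) * v a := by
    rw [sum_comm, ← sum_neg_distrib]
    refine sum_congr rfl fun a _ => ?_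
    rw [← sum_neg_distrib]
    refine sum_congr rfl fun b _ => ?_
    rw [← neg_sub, Left.sign_neg, SignType.coe_neg, neg_mul]
  calc _ = ∑ a, ∑ b, (SignType.sign (x a - x b) : ℝ) * v a
          - ∑ a, ∑ b, (SignType.sign (x a - x b) : ℝ) * v b := by
        simp only [mul_sub, sum_sub_distrib]
    _ = 2 * ∑ a, v a * ∑ b, (SignType.sign (x a - x b) : ℝ) := by
        rw [hskew, sub_neg_eq_add, ← two_mul]
        exact congrArg _ (sum_congr rfl fun a _ => by rw [← sum_mul, mul_comm])

theorem giniSum_eq_sum_mul_sum_sign (x : ι → ℝ) :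
    giniSum x = 2 * ∑ a, x a * ∑ b, (SignType.sign (x a - x b) : ℝ) := by
  simp only [giniSum, ← sign_mul_self]
  exact sum_sum_sign_sub_mul_sub x x

theorem card_filter_smul_le {x : ι → ℝ} {τ : ℝ} (hτ : 0 < τ) (a : ι) :
    #{b | (τ • x) b ≤ (τ • x) a} = #{b | x b ≤ x a} := by
  simp [mul_le_mul_iff_right₀ hτ]

theorem sum_sign_sub_of_injective [DecidableEq ι] {x : ι → ℝ} (hx : Injective x) (a : ι) :
    ∑ b, (SignType.sign (x a - x b) : ℝ) = 2 * #{b | x b ≤ x a} - Fintype.card ι - 1 := by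
  have hsign : ∀ b, (SignType.sign (x a - x b) : ℝ) =
      (if x b ≤ x a then 1 else 0) + (if x b < x a then 1 else 0) - 1 := by
    intro b
    rcases lt_trichotomy (x b) (x a) with h | h | h
    · simp [h, h.le, sign_pos (sub_pos.2 h)]
    · simp [h]
    · simp [h.not_ge, h.not_gt, sign_neg (sub_neg.2 h)]
  have hcard : #{b | x b ≤ x a} = #{b | x b < x a} + 1 := by
    rw [← card_insert_of_notMem (s := {b | x b < x a}) (a := a) (by simp)]
    congr 1
    ext b
    simp [le_iff_lt_or_eq, hx.eq_iff, or_comm]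
  simp only [hsign, sum_sub_distrib, sum_add_distrib, sum_boole, sum_const, card_univ,
    nsmul_eq_mul, mul_one, hcard]
  push_cast
  ring

theorem hasFDerivAt_abs_sub_apply {x : ι → ℝ} {a b : ι} (hab : x a = x b → a = b) :
    HasFDerivAt (fun y : ι → ℝ => |y a - y b|)
      ((SignType.sign (x a - x b) : ℝ) •
        (ContinuousLinearMap.proj (R := ℝ) (φ := fun _ : ι => ℝ) a -
          ContinuousLinearMap.proj b)) x := by
  rcases eq_or_ne a b with rfl | hne
  · simpa using hasFDerivAt_const (0 : ℝ) x
  · have hL := (ContinuousLinearMap.proj (R := ℝ) (φ := fun _ : ι => ℝ) a -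
      ContinuousLinearMap.proj b).hasFDerivAt (x := x)
    exact hL.abs (sub_ne_zero.2 (mt hab hne))

theorem hasFDerivAt_giniSum {x : ι → ℝ} (hx : Injective x) :
    HasFDerivAt giniSum
      ((2 : ℝ) • ∑ a, (∑ b, (SignType.sign (x a - x b) : ℝ)) •
        (ContinuousLinearMap.proj a : (ι → ℝ) →L[ℝ] ℝ)) x := by
  refine (HasFDerivAt.fun_sum fun a _ => HasFDerivAt.fun_sum fun b _ =>
    hasFDerivAt_abs_sub_apply fun h => hx h).congr_fderiv ?_
  refine ContinuousLinearMap.ext fun v => ?_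
  simpa [mul_comm] using sum_sum_sign_sub_mul_sub x v

end SignSums

section RowSum

variable {ι κ : Type*} [Fintype κ]

noncomputable def rowSum : (ι → κ → ℝ) →L[ℝ] (ι → ℝ) :=
  ContinuousLinearMap.pi fun a =>
    ∑ d, (ContinuousLinearMap.proj d : (κ → ℝ) →L[ℝ] ℝ).comp (ContinuousLinearMap.proj a)

@[simp]
theorem rowSum_apply (w : ι → κ → ℝ) (a : ι) : rowSum w a = ∑ d, w a d := by
  simp [rowSum]

theorem rowSum_single [DecidableEq ι] [DecidableEq κ] (i : ι) (d : κ) :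
    rowSum (Pi.single i (Pi.single d (1 : ℝ)) : ι → κ → ℝ) = Pi.single i 1 := by
  ext a
  rcases eq_or_ne a i with rfl | h <;> simp [*]

theorem fderiv_const_mul_giniSum_rowSum_single [Fintype ι] [DecidableEq ι] [DecidableEq κ]
    (c : ℝ) {z : ι → κ → ℝ} (hz : Injective (rowSum z)) (i : ι) (d : κ) :
    fderiv ℝ (fun w => c * giniSum (rowSum w)) z (Pi.single i (Pi.single d 1)) =
      2 * c * ∑ b, (SignType.sign (rowSum z i - rowSum z b) : ℝ) := by
  have h : HasFDerivAt (fun w => c * giniSum (rowSum w)) _ z :=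
    ((hasFDerivAt_giniSum hz).comp z rowSum.hasFDerivAt).const_mul c
  rw [h.fderiv]
  simp only [rowSum_apply, ContinuousLinearMap.smul_comp, smul_apply,
    ContinuousLinearMap.comp_apply, rowSum_single, _root_.sum_apply,
    ContinuousLinearMap.proj_apply, Pi.single_apply, smul_eq_mul, mul_ite, mul_one, mul_zero,
    sum_ite_eq', mem_univ, ↓reduceIte]
  ring

end RowSum

theorem phi0_eq_of_fderiv_eqOn_path {n D : ℕ} {f : (Fin n → Fin D → ℝ) → ℝ}
    {z : Fin n → Fin D → ℝ} {i : Fin n} {c : ℝ}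
    (h : ∀ τ ∈ Set.Ioo (0 : ℝ) 1, ∀ d, fderiv ℝ f (τ • z) (Pi.single i (Pi.single d 1)) = c) :
    phi0 f z i = (∑ d, z i d) * c := by
  rw [phi0, sum_mul]
  refine sum_congr rfl fun d _ => ?_
  rw [intervalIntegral.integral_congr_Ioo_of_le zero_le_one fun τ hτ => h τ hτ d]
  simp

theorem closed_form_attribution_gini_general
    (n D : ℕ)
    (z : Fin n → Fin D → ℝ)
    (g : Fin n → ℝ) (hg : ∀ i, g i = ∑ d : Fin D, z i d)
    (hdist : ∀ i j : Fin n, i ≠ j → g i ≠ g j)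
    (k : Fin n → ℕ)
    (hk : ∀ i, k i = (Finset.univ.filter (fun j => g j ≤ g i)).card)
    (f : (Fin n → Fin D → ℝ) → ℝ)
    (hf : ∀ w, f w = (1 / (2 * (n : ℝ) ^ 2)) *
      ∑ i : Fin n, ∑ j : Fin n, |(∑ d : Fin D, w i d) - ∑ d : Fin D, w j d|) :
    (∀ τ ∈ Set.Ioc (0:ℝ) 1, ∀ i : Fin n,
      (Finset.univ.filter
        (fun j => (∑ d : Fin D, (τ • z) j d) ≤ ∑ d : Fin D, (τ • z) i d)).card
        = k i) ∧
    (∀ i : Fin n, phi0 f z i = g i * (2 * (k i : ℝ) - n - 1) / (n : ℝ) ^ 2) ∧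
    ∑ i : Fin n, phi0 f z i = f z := by
  have hinj : Injective g := fun i j h => by_contra fun hij => hdist i j hij h
  have hf' : f = fun w => 1 / (2 * (n : ℝ) ^ 2) * giniSum (rowSum w) :=
    funext fun w => by simp [hf, giniSum]
  have hpath : ∀ τ : ℝ, rowSum (τ • z) = τ • g := fun τ => by
    rw [map_smul]; congr 1; ext i; simp [hg]
  have hrank : ∀ τ ∈ Set.Ioc (0:ℝ) 1, ∀ i : Fin n,
      #{j | ∑ d, (τ • z) j d ≤ ∑ d, (τ • z) i d} = k i := by
    intro τ hτ i
    simp only [← rowSum_apply, hpath, card_filter_smul_le hτ.1, hk]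
  have hgrad : ∀ τ ∈ Set.Ioo (0:ℝ) 1, ∀ i d,
      fderiv ℝ f (τ • z) (Pi.single i (Pi.single d 1)) = (2 * (k i : ℝ) - n - 1) / n ^ 2 := by
    intro τ hτ i d
    have hτinj : Injective (τ • g) := (smul_right_injective _ hτ.1.ne').comp hinj
    rw [hf', fderiv_const_mul_giniSum_rowSum_single _ (by rwa [hpath]), hpath,
      sum_sign_sub_of_injective hτinj, card_filter_smul_le hτ.1, ← hk, Fintype.card_fin]
    ring
  have hphi : ∀ i, phi0 f z i = g i * (2 * (k i : ℝ) - n - 1) / (n : ℝ) ^ 2 := fun i => by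
    rw [phi0_eq_of_fderiv_eqOn_path fun τ hτ => hgrad τ hτ i, ← hg, mul_div_assoc]
  refine ⟨hrank, hphi, ?_⟩
  have hgz : rowSum z = g := by simpa using hpath 1
  have hfz : f z = 1 / (2 * (n : ℝ) ^ 2) * giniSum g := by simp only [hf', hgz]
  rw [hfz, giniSum_eq_sum_mul_sum_sign]
  simp only [hphi, sum_sign_sub_of_injective hinj, ← hk, Fintype.card_fin, ← sum_div]
  ring

/-- Closed-form attribution for the Gini mean-difference value function
`f^gini(z) = (1/(2n²))·Σ_i Σ_j |g_i − g_j|` with pairwise-distinct composites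
`g_i = Σ_d z_{i,d}` and rank `k_i = #{j : g_j ≤ g_i}`: along the linear path
`τ·z` (τ ∈ (0,1]) the ranks are preserved, the attribution is
`φ_i^gini = g_i·(2k_i − n − 1)/n²`, and the attributions sum to `f^gini(z)`. -/
theorem closed_form_attribution_gini
    (n D : ℕ) (hn : 2 ≤ n) (hD : 1 ≤ D)
    (z : Fin n → Fin D → ℝ)
    (g : Fin n → ℝ) (hg : ∀ i, g i = ∑ d : Fin D, z i d)
    (hdist : ∀ i j : Fin n, i ≠ j → g i ≠ g j)
    (k : Fin n → ℕ)
    (hk : ∀ i, k i = (Finset.univ.filter (fun j => g j ≤ g i)).card)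
    (f : (Fin n → Fin D → ℝ) → ℝ)
    (hf : ∀ w, f w = (1 / (2 * (n : ℝ) ^ 2)) *
      ∑ i : Fin n, ∑ j : Fin n, |(∑ d : Fin D, w i d) - ∑ d : Fin D, w j d|) :
    (∀ τ ∈ Set.Ioc (0:ℝ) 1, ∀ i : Fin n,
      (Finset.univ.filter
        (fun j => (∑ d : Fin D, (τ • z) j d) ≤ ∑ d : Fin D, (τ • z) i d)).card
        = k i) ∧
    (∀ i : Fin n, phi0 f z i = g i * (2 * (k i : ℝ) - n - 1) / (n : ℝ) ^ 2) ∧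
    ∑ i : Fin n, phi0 f z i = f z :=
  closed_form_attribution_gini_general n D z g hg hdist k hk f hf
end

section
/- Common slot gradient under permutation invariance: fix n ≥ 2, D ≥ 1, and let f : (ℝ^D)^n → ℝ be C² and permutation-invariant, with ∂²f/(∂z_{i,d} ∂z_{j,d'}) ≡ 0 for all i ≠ j and all d, d'. Then there exists a single map ξ : ℝ^D → ℝ^D such that for every slot i ∈ {1,…,n} and every z ∈ (ℝ^D)^n, the gradient of f with respect to its i-th slot satisfies ∇_{z_i} f(z) = ξ(z_i); in particular, ∇_{z_i} f(z) depends on z only through z_i and the same function ξ works for every slot. -/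
/-!
Vanishing mixed partials across distinct slots say that `∂f/∂z_{j,d}` has zero derivative in
every direction that leaves `z_j` fixed, so it depends on `z` only through `z_j`; its value at `z`
is therefore its value at the diagonal point `(z_j, …, z_j)`. At a diagonal point, which every
permutation of the slots fixes, permutation invariance makes the gradients in all slots agree.
-/

open scoped BigOperators

theorem LinearMap.apply_eq_zero_of_apply_single_single_eq_zero {R M ι κ : Type*} [Semiring R]
    [AddCommMonoid M] [Module R M] [Fintype ι] [DecidableEq ι] [Finite κ] [DecidableEq κ]
    (L : (ι → κ → R) →ₗ[R] M) {j : ι}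
    (hL : ∀ i, i ≠ j → ∀ d, L (Pi.single i (Pi.single d 1)) = 0)
    {v : ι → κ → R} (hv : v j = 0) : L v = 0 := by
  have hslot : ∀ i, i ≠ j → L ∘ₗ LinearMap.single R (fun _ => κ → R) i = 0 := fun i hi =>
    LinearMap.pi_ext fun d c => by
      rw [LinearMap.comp_apply, LinearMap.coe_single, LinearMap.zero_apply, ← mul_one c,
        ← smul_eq_mul, Pi.single_smul', Pi.single_smul', map_smul, hL i hi d, smul_zero]
  rw [← Finset.univ_sum_single v, map_sum]
  refine Finset.sum_eq_zero fun i _ => ?_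
  rcases eq_or_ne i j with rfl | hi
  · simp [hv]
  · exact LinearMap.congr_fun (hslot i hi) (v i)

theorem apply_add_eq_of_fderiv_apply_eq_zero {𝕜 E F : Type*} [RCLike 𝕜] [NormedAddCommGroup E]
    [NormedSpace 𝕜 E] [NormedAddCommGroup F] [NormedSpace 𝕜 F] {g : E → F}
    (hg : Differentiable 𝕜 g) {v : E} (hv : ∀ w, fderiv 𝕜 g w v = 0) (z : E) :
    g (z + v) = g z := by
  have hline : ∀ t : 𝕜, HasDerivAt (fun t : 𝕜 => g (z + t • v)) 0 t := fun t => by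
    simpa [hv, Function.comp_def] using (hg (z + t • v)).hasFDerivAt.comp_hasDerivAt t
      (((hasDerivAt_id t).smul_const v).const_add z)
  simpa using is_const_of_deriv_eq_zero (fun t => (hline t).differentiableAt)
    (fun t => (hline t).deriv) 1 0

section

variable {𝕜 E F : Type*} [NontriviallyNormedField 𝕜] [NormedAddCommGroup E] [NormedSpace 𝕜 E]
  [NormedAddCommGroup F] [NormedSpace 𝕜 F]

theorem fderiv_apply_eq_of_comp_eq {f : E → F} (iso : E ≃L[𝕜] E) (hf : f ∘ iso = f) (x v : E) :
    fderiv 𝕜 f (iso x) (iso v) = fderiv 𝕜 f x v := by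
  conv_rhs => rw [← hf, iso.comp_right_fderiv]
  rfl

theorem fderiv_comp_perm_apply {ι : Type*} [Fintype ι] {f : (ι → E) → F} (π : Equiv.Perm ι)
    (hf : ∀ z, f (fun k => z (π k)) = f z) (z v : ι → E) :
    fderiv 𝕜 f (fun k => z (π k)) (fun k => v (π k)) = fderiv 𝕜 f z v := by
  let iso := ContinuousLinearEquiv.piCongrLeft 𝕜 (fun _ => E) π.symm
  have hiso : ∀ x, iso x = fun k => x (π k) := fun x => by
    funext k
    simp [iso, ContinuousLinearEquiv.piCongrLeft, Equiv.piCongrLeft_apply, eq_rec_constant]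
  simpa only [hiso] using fderiv_apply_eq_of_comp_eq iso (funext fun x => by simp [hiso, hf]) z v

end

theorem fderiv_apply_single_eq_of_mixedPartial_eq_zero {n D : ℕ} {f : (Fin n → Fin D → ℝ) → ℝ}
    (hf : ContDiff ℝ 2 f) {j : Fin n} {d' : Fin D}
    (hmixed : ∀ i, i ≠ j → ∀ d z, mixedPartial f i d j d' z = 0)
    {z z' : Fin n → Fin D → ℝ} (hz : z j = z' j) :
    fderiv ℝ f z (Pi.single j (Pi.single d' 1)) = fderiv ℝ f z' (Pi.single j (Pi.single d' 1)) := by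
  have hg : Differentiable ℝ fun w => fderiv ℝ f w (Pi.single j (Pi.single d' 1)) :=
    ((hf.fderiv_right (m := 1) (by norm_num)).differentiable one_ne_zero).clm_apply
      (differentiable_const _)
  simpa using apply_add_eq_of_fderiv_apply_eq_zero hg (v := z - z')
    (fun w => (fderiv ℝ _ w).toLinearMap.apply_eq_zero_of_apply_single_single_eq_zero
      (fun i hi d => hmixed i hi d w) (by simp [hz])) z'

theorem common_slot_gradient_under_permutation_invariance_general
    (n D : ℕ)
    (f : (Fin n → Fin D → ℝ) → ℝ) (hf : ContDiff ℝ 2 f)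
    (hsym : ∀ (π : Equiv.Perm (Fin n)) (z : Fin n → Fin D → ℝ),
      f (fun k => z (π k)) = f z)
    (hhess : ∀ (i j : Fin n), i ≠ j →
      ∀ (d d' : Fin D) (z : Fin n → Fin D → ℝ), mixedPartial f i d j d' z = 0) :
    ∃ ξ : (Fin D → ℝ) → (Fin D → ℝ),
      ∀ (i : Fin n) (z : Fin n → Fin D → ℝ) (d : Fin D),
        fderiv ℝ f z (Pi.single i (Pi.single d 1)) = ξ (z i) d := by
  rcases isEmpty_or_nonempty (Fin n) with _ | ⟨⟨i₀⟩⟩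
  · exact ⟨0, fun i => isEmptyElim i⟩
  refine ⟨fun x d => fderiv ℝ f (fun _ => x) (Pi.single i₀ (Pi.single d 1)), fun i z d => ?_⟩
  have hswap : (fun k => (Pi.single i₀ (Pi.single d 1) : Fin n → Fin D → ℝ) (Equiv.swap i₀ i k)) =
      (Pi.single i (Pi.single d 1) : Fin n → Fin D → ℝ) :=
    (Pi.single_comp_equiv (Equiv.swap i₀ i) i₀ _).trans (by simp)
  calc fderiv ℝ f z (Pi.single i (Pi.single d 1))
      = fderiv ℝ f (fun _ => z i) (Pi.single i (Pi.single d 1)) :=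
        fderiv_apply_single_eq_of_mixedPartial_eq_zero hf (fun k hk d' z => hhess k i hk d' d z) rfl
    _ = fderiv ℝ f (fun _ => z i) (Pi.single i₀ (Pi.single d 1)) := by
        rw [← hswap]
        exact fderiv_comp_perm_apply (Equiv.swap i₀ i) (hsym _) (fun _ => z i) _

/-- Common slot gradient under permutation invariance: if `f` is `C²`,
permutation-invariant, and all mixed second partials across distinct slots
vanish, then there is a single map `ξ : ℝ^D → ℝ^D` such that for every slot
`i` and every configuration `z`, the gradient of `f` with respect to its
`i`-th slot equals `ξ(z_i)`. -/
theorem common_slot_gradient_under_permutation_invariance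
    (n D : ℕ) (hn : 2 ≤ n) (hD : 1 ≤ D)
    (f : (Fin n → Fin D → ℝ) → ℝ) (hf : ContDiff ℝ 2 f)
    (hsym : ∀ (π : Equiv.Perm (Fin n)) (z : Fin n → Fin D → ℝ),
      f (fun k => z (π k)) = f z)
    (hhess : ∀ (i j : Fin n), i ≠ j →
      ∀ (d d' : Fin D) (z : Fin n → Fin D → ℝ), mixedPartial f i d j d' z = 0) :
    ∃ ξ : (Fin D → ℝ) → (Fin D → ℝ),
      ∀ (i : Fin n) (z : Fin n → Fin D → ℝ) (d : Fin D),
        fderiv ℝ f z (Pi.single i (Pi.single d 1)) = ξ (z i) d :=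
  common_slot_gradient_under_permutation_invariance_general n D f hf hsym hhess
end

section
/- Telescoping additive decomposition: fix n ≥ 1, D ≥ 1, let f : (ℝ^D)^n → ℝ be C¹, and suppose there exists Ψ : ℝ^D → ℝ of class C¹ such that ∇_{z_i} f(z) = ∇Ψ(z_i) for every slot i and every z ∈ (ℝ^D)^n. Then for every fixed z* ∈ ℝ^D and every z ∈ (ℝ^D)^n, f(z_1,…,z_n) = f(z*,…,z*) + Σ_{i=1}^n (Ψ(z_i) − Ψ(z*)); in particular, setting μ(y) := n·Ψ(y) + f(z*,…,z*) − n·Ψ(z*) gives f(z) = (1/n)·Σ_{i=1}^n μ(z_i). -/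
open scoped BigOperators

/-! Since `∇_{z_i} f(z) = ∇Ψ(z_i)` for each slot, `f` and `z ↦ ∑ i, Ψ (z i)` have the same
Fréchet derivative everywhere, so their difference is constant on the connected space
`(ℝ^D)^n`; evaluating it at the diagonal point `(z*, …, z*)` gives the decomposition. -/

section

variable {𝕜 ι E G : Type*} [RCLike 𝕜] [Fintype ι]
  [NormedAddCommGroup E] [NormedSpace 𝕜 E] [NormedAddCommGroup G] [NormedSpace 𝕜 G]

theorem ContinuousLinearMap.eq_sum_comp_proj_of_comp_single [DecidableEq ι]
    (L : (ι → E) →L[𝕜] G) (M : ι → E →L[𝕜] G)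
    (h : ∀ i, L.comp (ContinuousLinearMap.single 𝕜 (fun _ => E) i) = M i) :
    L = ∑ i, (M i).comp (ContinuousLinearMap.proj i) := by
  ext v
  conv_lhs => rw [← Finset.univ_sum_single v]
  simp [← h]

theorem hasFDerivAt_sum_apply {Ψ : E → G} (hΨ : Differentiable 𝕜 Ψ) (z : ι → E) :
    HasFDerivAt (fun z : ι → E => ∑ i, Ψ (z i))
      (∑ i, (fderiv 𝕜 Ψ (z i)).comp (ContinuousLinearMap.proj i)) z :=
  HasFDerivAt.fun_sum fun i _ => (hΨ (z i)).hasFDerivAt.comp z (hasFDerivAt_apply i z)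

theorem eq_add_sum_sub_of_fderiv_comp_single [DecidableEq ι] {f : (ι → E) → G} {Ψ : E → G}
    (hf : Differentiable 𝕜 f) (hΨ : Differentiable 𝕜 Ψ)
    (h : ∀ z i, (fderiv 𝕜 f z).comp (ContinuousLinearMap.single 𝕜 (fun _ => E) i) =
      fderiv 𝕜 Ψ (z i))
    (z w : ι → E) :
    f z = f w + ∑ i, (Ψ (z i) - Ψ (w i)) := by
  have hsum_deriv (x : ι → E) : HasFDerivAt (fun z : ι → E => ∑ i, Ψ (z i)) (fderiv 𝕜 f x) x := by
    rw [(fderiv 𝕜 f x).eq_sum_comp_proj_of_comp_single _ (h x)]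
    exact hasFDerivAt_sum_apply hΨ x
  have hconst : f z - ∑ i, Ψ (z i) = f w - ∑ i, Ψ (w i) :=
    is_const_of_fderiv_eq_zero (hf.sub fun x => (hsum_deriv x).differentiableAt)
      (fun x => ((hf x).hasFDerivAt.fun_sub (hsum_deriv x)).fderiv.trans (sub_self _)) z w
  rw [sub_eq_iff_eq_add] at hconst
  rw [hconst, Finset.sum_sub_distrib]
  abel

end

theorem telescoping_additive_decomposition_general
    (n D : ℕ) (hn : 1 ≤ n)
    (f : (Fin n → Fin D → ℝ) → ℝ) (hf : ContDiff ℝ 1 f)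
    (Ψ : (Fin D → ℝ) → ℝ) (hΨ : ContDiff ℝ 1 Ψ)
    (hgrad : ∀ (i : Fin n) (z : Fin n → Fin D → ℝ) (d : Fin D),
      fderiv ℝ f z (Pi.single i (Pi.single d 1)) =
        fderiv ℝ Ψ (z i) (Pi.single d 1)) :
    ∀ (zstar : Fin D → ℝ) (z : Fin n → Fin D → ℝ),
      f z = f (fun _ => zstar) + ∑ i : Fin n, (Ψ (z i) - Ψ zstar) ∧
      f z = (1 / (n : ℝ)) *
        ∑ i : Fin n, ((n : ℝ) * Ψ (z i) + f (fun _ => zstar) -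
          (n : ℝ) * Ψ zstar) := by
  have hslot (z : Fin n → Fin D → ℝ) (i : Fin n) :
      (fderiv ℝ f z).comp (ContinuousLinearMap.single ℝ (fun _ => Fin D → ℝ) i) =
        fderiv ℝ Ψ (z i) :=
    ContinuousLinearMap.coe_injective
      ((Pi.basisFun ℝ (Fin D)).ext fun d => by simpa using hgrad i z d)
  intro zstar z
  have hdecomp := eq_add_sum_sub_of_fderiv_comp_single (hf.differentiable one_ne_zero)
    (hΨ.differentiable one_ne_zero) hslot z (fun _ => zstar)
  refine ⟨hdecomp, ?_⟩
  have hn₀ : (n : ℝ) ≠ 0 := Nat.cast_ne_zero.mpr (Nat.one_le_iff_ne_zero.mp hn)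
  simp only [hdecomp, Finset.sum_add_distrib, Finset.sum_sub_distrib, Finset.sum_const,
    Finset.card_univ, Fintype.card_fin, nsmul_eq_mul, ← Finset.mul_sum]
  field_simp
  ring

/-- Telescoping additive decomposition: if `f : (ℝ^D)^n → ℝ` is `C¹` and there
is a `C¹` potential `Ψ : ℝ^D → ℝ` with `∇_{z_i} f(z) = ∇Ψ(z_i)` for every slot
`i` and every `z`, then for every fixed `z*` and every `z`,
`f(z) = f(z*,…,z*) + Σ_i (Ψ(z_i) − Ψ(z*))`; in particular, with
`μ(y) := n·Ψ(y) + f(z*,…,z*) − n·Ψ(z*)`, `f(z) = (1/n)·Σ_i μ(z_i)`. -/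
theorem telescoping_additive_decomposition
    (n D : ℕ) (hn : 1 ≤ n) (hD : 1 ≤ D)
    (f : (Fin n → Fin D → ℝ) → ℝ) (hf : ContDiff ℝ 1 f)
    (Ψ : (Fin D → ℝ) → ℝ) (hΨ : ContDiff ℝ 1 Ψ)
    (hgrad : ∀ (i : Fin n) (z : Fin n → Fin D → ℝ) (d : Fin D),
      fderiv ℝ f z (Pi.single i (Pi.single d 1)) =
        fderiv ℝ Ψ (z i) (Pi.single d 1)) :
    ∀ (zstar : Fin D → ℝ) (z : Fin n → Fin D → ℝ),
      f z = f (fun _ => zstar) + ∑ i : Fin n, (Ψ (z i) - Ψ zstar) ∧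
      f z = (1 / (n : ℝ)) *
        ∑ i : Fin n, ((n : ℝ) * Ψ (z i) + f (fun _ => zstar) -
          (n : ℝ) * Ψ zstar) :=
  telescoping_additive_decomposition_general n D hn f hf Ψ hΨ hgrad
end
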